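/- arXiv:2502.11884 — 2 statements merged into one kernel-verified Lean document; each statement's English description precedes it below -/
import Mathlib

section
/- Let α > 0 and λ > 0. Then for every t > 0, the function t ↦ E_α(−λ t^α) is differentiable at t with derivative d/dt E_α(−λ t^α) = −λ t^{α−1} E_{α,α}(−λ t^α). -/
open Real Filter
open scoped Nat

private lemma summable_aux (α q : ℝ) (hα : 0 < α) (hq : 0 ≤ q) :
    Summable (fun k : ℕ => (k : ℝ) * q ^ k / Real.Gamma (α * k + 1)) := by
  set Q : ℝ := max (2 * q) 1 with hQdef
  have hQ1 : (1 : ℝ) ≤ Q := le_max_right _ _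
  have h2Q : (1 : ℝ) ≤ 2 * Q := by nlinarith
  set r : ℝ := (2 * Q) ^ (2 / α) with hrdef
  have hr1 : (1 : ℝ) ≤ r := Real.one_le_rpow h2Q (by positivity)
  -- eventually r ^ n < n!
  have hfac : ∀ᶠ n : ℕ in atTop, r ^ n ≤ (n ! : ℝ) := by
    filter_upwards [FloorSemiring.eventually_mul_pow_lt_factorial_sub (1 : ℝ) r 0] with n h
    simpa using h.le
  obtain ⟨N, hN⟩ := eventually_atTop.1 hfac
  obtain ⟨k₀, hk₀⟩ := exists_nat_ge ((N + 2) / α)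
  refine Summable.of_norm_bounded_eventually_nat (g := fun k => (1/2 : ℝ) ^ k)
    (summable_geometric_of_lt_one (by norm_num) (by norm_num)) ?_
  rw [eventually_atTop]
  refine ⟨max k₀ 1, fun k hk => ?_⟩
  have hk1 : 1 ≤ k := le_trans (le_max_right _ _) hk
  have hk0' : (k₀ : ℝ) ≤ k := by exact_mod_cast le_trans (le_max_left _ _) hk
  have hαk : (N : ℝ) + 2 ≤ α * k := by
    have := div_le_iff₀ hα |>.1 (hk₀.trans hk0')
    linarith [mul_comm α (k : ℝ)]
  set m : ℕ := ⌊α * (k : ℝ)⌋₊ with hmdef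
  have hm_le : (m : ℝ) ≤ α * k := Nat.floor_le (by positivity)
  have hm_ge : α * k - 1 ≤ (m : ℝ) := by
    have := Nat.sub_one_lt_floor (α * k)
    linarith
  have hmN : N ≤ m := by
    have : (N : ℝ) ≤ m := by linarith
    exact_mod_cast this
  have hΓpos : 0 < Real.Gamma (α * k + 1) := Real.Gamma_pos_of_pos (by positivity)
  -- step 1 : m! ≤ Γ(αk+1)
  have step1 : ((m ! : ℕ) : ℝ) ≤ Real.Gamma (α * k + 1) := by
    rw [← Real.Gamma_nat_eq_factorial]
    refine Real.Gamma_strictMonoOn_Ici.monotoneOn ?_ ?_ (by linarith)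
    · simp only [Set.mem_Ici]; linarith
    · simp only [Set.mem_Ici]; linarith
  -- step 2 : r ^ m ≤ m!
  have step2 : r ^ m ≤ ((m ! : ℕ) : ℝ) := hN m hmN
  -- step 3 : r ^ (αk - 1) ≤ r ^ m
  have step3 : r ^ (α * k - 1 : ℝ) ≤ r ^ m := by
    rw [← Real.rpow_natCast r m]
    exact Real.rpow_le_rpow_of_exponent_le hr1 hm_ge
  -- step 4 : r ^ (αk/2) ≤ r ^ (αk - 1)
  have step4 : r ^ (α * k / 2 : ℝ) ≤ r ^ (α * k - 1 : ℝ) :=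
    Real.rpow_le_rpow_of_exponent_le hr1 (by linarith)
  -- step 5 : (2Q)^k = r ^ (αk/2)
  have step5 : (2 * Q) ^ k = r ^ (α * k / 2 : ℝ) := by
    rw [hrdef, ← Real.rpow_natCast (2 * Q) k, ← Real.rpow_mul (by linarith)]
    congr 1
    field_simp
  -- step 6 : k * (2q)^k ≤ (2Q)^k
  have step6 : (k : ℝ) * (2 * q) ^ k ≤ (2 * Q) ^ k := by
    have h1 : (k : ℝ) ≤ 2 ^ k := by
      exact_mod_cast (Nat.lt_two_pow_self (n := k)).le
    have h2 : (2 * q) ^ k ≤ Q ^ k :=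
      pow_le_pow_left₀ (by linarith) (le_max_left _ _) k
    calc (k : ℝ) * (2 * q) ^ k ≤ 2 ^ k * Q ^ k := by
          apply mul_le_mul h1 h2 (by positivity) (by positivity)
      _ = (2 * Q) ^ k := by rw [← mul_pow]
  have key : (k : ℝ) * (2 * q) ^ k ≤ Real.Gamma (α * k + 1) := by
    calc (k : ℝ) * (2 * q) ^ k ≤ (2 * Q) ^ k := step6
      _ = r ^ (α * k / 2 : ℝ) := step5
      _ ≤ r ^ (α * k - 1 : ℝ) := step4
      _ ≤ r ^ m := step3
      _ ≤ ((m ! : ℕ) : ℝ) := step2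
      _ ≤ Real.Gamma (α * k + 1) := step1
  have hterm : (0 : ℝ) ≤ (k : ℝ) * q ^ k / Real.Gamma (α * k + 1) := by positivity
  rw [Real.norm_eq_abs, abs_of_nonneg hterm, div_le_iff₀ hΓpos]
  calc (k : ℝ) * q ^ k = ((k : ℝ) * (2 * q) ^ k) * (1/2 : ℝ) ^ k := by
        rw [mul_pow, mul_assoc]
        congr 1
        rw [mul_comm (2 ^ k : ℝ), mul_assoc, div_pow, one_pow]
        field_simp
    _ ≤ Real.Gamma (α * k + 1) * (1/2) ^ k := by
        apply mul_le_mul_of_nonneg_right key (by positivity)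
    _ = (1/2) ^ k * Real.Gamma (α * k + 1) := mul_comm _ _

/-- The Mittag-Leffler function of real parameters `α, β > 0` at a real argument:
`E_{α,β}(x) = Σ_{k=0}^∞ x^k / Γ(αk + β)`. -/
noncomputable def mittagLeffler (α β x : ℝ) : ℝ :=
  ∑' k : ℕ, x ^ k / Real.Gamma (α * k + β)

/-- Let `α > 0` and `λ > 0`. Then for every `t > 0`, the function
`t ↦ E_α(−λ t^α)` is differentiable at `t` with derivative
`d/dt E_α(−λ t^α) = −λ t^{α−1} E_{α,α}(−λ t^α)`. (Here `E_α = E_{α,1}`.) -/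
theorem hasDerivAt_mittagLeffler_one (α lam : ℝ) (hα : 0 < α) (hlam : 0 < lam) :
    ∀ t : ℝ, 0 < t →
      HasDerivAt (fun s : ℝ => mittagLeffler α 1 (-lam * s ^ α))
        (-lam * t ^ (α - 1) * mittagLeffler α α (-lam * t ^ α)) t := by
  intro t ht
  have ht1 : (0 : ℝ) < t + 1 := by linarith
  have ht2 : (0 : ℝ) < t / 2 := by linarith
  set q : ℝ := lam * (t + 1) ^ (α : ℝ) with hqdef
  have hq : 0 < q := mul_pos hlam (Real.rpow_pos_of_pos ht1 α)
  set B : ℝ := (t + 1) ^ (α : ℝ) / (t / 2) with hBdef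
  have hB : 0 < B := div_pos (Real.rpow_pos_of_pos ht1 α) ht2
  set C : ℝ := lam * α * B / q with hCdef
  have hC : 0 < C := by positivity
  set T : Set ℝ := Set.Ioo (t / 2) (t + 1) with hTdef
  have htmem : t ∈ T := ⟨by linarith, by linarith⟩
  set g : ℕ → ℝ → ℝ := fun k s => (-lam * s ^ (α : ℝ)) ^ k / Real.Gamma (α * k + 1)
    with hgdef
  set g' : ℕ → ℝ → ℝ := fun k s =>
    ((k : ℝ) * (-lam * s ^ (α : ℝ)) ^ (k - 1) / Real.Gamma (α * k + 1)) *
      (-lam * (α * s ^ (α - 1 : ℝ))) with hg'def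
  set u : ℕ → ℝ := fun k => (k : ℝ) * q ^ k / Real.Gamma (α * k + 1) * C with hudef
  have hu : Summable u := (summable_aux α q hα hq.le).mul_right C
  -- derivatives of each term
  have hderiv : ∀ k : ℕ, ∀ s ∈ T, HasDerivAt (g k) (g' k s) s := by
    intro k s hs
    have hs0 : 0 < s := lt_trans ht2 hs.1
    have h1 : HasDerivAt (fun s : ℝ => -lam * s ^ (α : ℝ))
        (-lam * (α * s ^ (α - 1 : ℝ))) s :=
      (Real.hasDerivAt_rpow_const (Or.inl hs0.ne')).const_mul (-lam)
    have h2 : HasDerivAt (fun x : ℝ => x ^ k / Real.Gamma (α * k + 1))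
        ((k : ℝ) * (-lam * s ^ (α : ℝ)) ^ (k - 1) / Real.Gamma (α * k + 1))
        (-lam * s ^ (α : ℝ)) := (hasDerivAt_pow k _).div_const _
    exact h2.comp s h1
  -- bounds
  have hbound : ∀ k : ℕ, ∀ s ∈ T, ‖g' k s‖ ≤ u k := by
    intro k s hs
    have hs0 : 0 < s := lt_trans ht2 hs.1
    have hsα : s ^ (α : ℝ) ≤ (t + 1) ^ (α : ℝ) :=
      Real.rpow_le_rpow hs0.le (by linarith [hs.2]) hα.le
    have hsα0 : 0 < s ^ (α : ℝ) := Real.rpow_pos_of_pos hs0 α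
    have hΓpos : 0 < Real.Gamma (α * k + 1) := Real.Gamma_pos_of_pos (by positivity)
    have habs : |(-lam * s ^ (α : ℝ))| = lam * s ^ (α : ℝ) := by
      rw [abs_of_nonpos (by nlinarith)]; ring
    have hsa1 : s ^ (α - 1 : ℝ) ≤ B := by
      rw [Real.rpow_sub hs0, Real.rpow_one, hBdef]
      exact div_le_div₀ (Real.rpow_pos_of_pos ht1 α).le hsα ht2 hs.1.le
    have hsa1pos : 0 < s ^ (α - 1 : ℝ) := Real.rpow_pos_of_pos hs0 _
    have hq' : lam * s ^ (α : ℝ) ≤ q := by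
      rw [hqdef]; exact mul_le_mul_of_nonneg_left hsα hlam.le
    rcases Nat.eq_zero_or_pos k with rfl | hk
    · simp [hg'def, hudef]
    · have hnorm : ‖g' k s‖ =
          (k : ℝ) * (lam * s ^ (α : ℝ)) ^ (k - 1) / Real.Gamma (α * k + 1) *
            (lam * (α * s ^ (α - 1 : ℝ))) := by
        rw [hg'def]
        rw [Real.norm_eq_abs, abs_mul, abs_div, abs_mul, abs_pow, habs,
          abs_of_nonneg (Nat.cast_nonneg k), abs_of_pos hΓpos, abs_mul,
          abs_of_nonpos (by linarith : -lam ≤ 0), abs_of_pos (by positivity)]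
        ring
      have hqpow : (lam * s ^ (α : ℝ)) ^ (k - 1) ≤ q ^ (k - 1) :=
        pow_le_pow_left₀ (by positivity) hq' _
      have hqk : q ^ k = q ^ (k - 1) * q := by
        rw [← pow_succ, Nat.sub_add_cancel hk]
      have hC' : (k : ℝ) * q ^ k / Real.Gamma (α * k + 1) * C =
          (k : ℝ) * q ^ (k - 1) / Real.Gamma (α * k + 1) * (lam * (α * B)) := by
        rw [hCdef, hqk]; field_simp
      have h1 : (k : ℝ) * (lam * s ^ (α : ℝ)) ^ (k - 1) / Real.Gamma (α * k + 1) ≤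
          (k : ℝ) * q ^ (k - 1) / Real.Gamma (α * k + 1) := by
        gcongr
      have h2 : lam * (α * s ^ (α - 1 : ℝ)) ≤ lam * (α * B) := by
        apply mul_le_mul_of_nonneg_left _ hlam.le
        exact mul_le_mul_of_nonneg_left hsa1 hα.le
      calc ‖g' k s‖ = (k : ℝ) * (lam * s ^ (α : ℝ)) ^ (k - 1) / Real.Gamma (α * k + 1) *
            (lam * (α * s ^ (α - 1 : ℝ))) := hnorm
        _ ≤ (k : ℝ) * q ^ (k - 1) / Real.Gamma (α * k + 1) * (lam * (α * B)) :=
            mul_le_mul h1 h2 (by positivity) (by positivity)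
        _ = u k := hC'.symm
  -- summability at t
  have hg0 : Summable (fun k => g k t) := by
    refine Summable.of_norm_bounded_eventually_nat
      (g := fun k => (k : ℝ) * q ^ k / Real.Gamma (α * k + 1))
      (summable_aux α q hα hq.le) ?_
    rw [eventually_atTop]
    refine ⟨1, fun k hk => ?_⟩
    have hΓpos : 0 < Real.Gamma (α * k + 1) := Real.Gamma_pos_of_pos (by positivity)
    have htα : 0 < t ^ (α : ℝ) := Real.rpow_pos_of_pos ht α
    have habs : |(-lam * t ^ (α : ℝ))| = lam * t ^ (α : ℝ) := by
      rw [abs_of_nonpos (by nlinarith)]; ring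
    rw [hgdef]
    simp only [Real.norm_eq_abs, abs_div, abs_pow, habs, abs_of_pos hΓpos]
    have hle : (lam * t ^ (α : ℝ)) ^ k / Real.Gamma (α * k + 1) ≤
        (k : ℝ) * q ^ k / Real.Gamma (α * k + 1) := by
      gcongr
      · calc (lam * t ^ (α : ℝ)) ^ k ≤ q ^ k := by
              gcongr
              rw [hqdef]
              exact mul_le_mul_of_nonneg_left
                (Real.rpow_le_rpow ht.le (by linarith) hα.le) hlam.le
          _ = 1 * q ^ k := (one_mul _).symm
          _ ≤ (k : ℝ) * q ^ k := by
              apply mul_le_mul_of_nonneg_right _ (by positivity)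
              exact_mod_cast hk
    exact hle
  have H := hasDerivAt_tsum_of_isPreconnected hu isOpen_Ioo (convex_Ioo _ _).isPreconnected
    hderiv hbound htmem hg0 htmem
  have hsum' : Summable (fun k => g' k t) :=
    Summable.of_norm_bounded (g := u) hu (fun k => hbound k t htmem)
  have hfun : (fun s : ℝ => mittagLeffler α 1 (-lam * s ^ (α : ℝ))) =
      (fun z => ∑' n, g n z) := rfl
  rw [hfun]
  refine H.congr_deriv ?_
  symm
  -- now compute the sum of derivatives
  rw [Summable.tsum_eq_zero_add hsum']
  have h0 : g' 0 t = 0 := by simp [hg'def]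
  have hterm : ∀ j : ℕ, g' (j + 1) t =
      (-lam * t ^ (α - 1 : ℝ)) * ((-lam * t ^ (α : ℝ)) ^ j / Real.Gamma (α * j + α)) := by
    intro j
    have hx : 0 < α * j + α := by positivity
    have hΓpos : 0 < Real.Gamma (α * j + α) := Real.Gamma_pos_of_pos hx
    have hΓ : Real.Gamma (α * (j + 1 : ℕ) + 1) = (α * j + α) * Real.Gamma (α * j + α) := by
      have : α * ((j : ℝ) + 1) + 1 = (α * j + α) + 1 := by ring
      rw [Nat.cast_add, Nat.cast_one, this, Real.Gamma_add_one hx.ne']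
    rw [hg'def]
    simp only [Nat.add_sub_cancel, Nat.cast_add, Nat.cast_one]
    rw [show α * ((j : ℝ) + 1) + 1 = α * ((j + 1 : ℕ) : ℝ) + 1 by push_cast; ring, hΓ]
    field_simp
  rw [h0, zero_add]
  have : (fun j : ℕ => g' (j + 1) t) =
      (fun j : ℕ => (-lam * t ^ (α - 1 : ℝ)) *
        ((-lam * t ^ (α : ℝ)) ^ j / Real.Gamma (α * j + α))) := funext hterm
  rw [this, tsum_mul_left]
  rw [mittagLeffler]
end

section
/- Let α > 0, λ > 0 and let k ≥ 1 be a natural number. Then for every t > 0, the function t ↦ t^k E_{α,k+1}(−λ t^α) is differentiable at t with derivative d/dt (t^k E_{α,k+1}(−λ t^α)) = t^{k−1} E_{α,k}(−λ t^α). -/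
open Real

lemma summable_of_block_half {a : ℕ → ℝ} (ha : ∀ n, 0 ≤ a n) (N : ℕ) (hN : 0 < N)
    (h : ∀ n, a (n + N) ≤ (1/2) * a n) : Summable a := by
  have : NeZero N := ⟨hN.ne'⟩
  have key : ∀ j m, a (m * N + j) ≤ (1/2 : ℝ)^m * a j := by
    intro j m
    induction m with
    | zero => simp
    | succ m ih =>
      have e : (m+1)*N + j = (m*N + j) + N := by ring
      rw [e]
      calc a (m*N+j+N) ≤ (1/2) * a (m*N+j) := h _
        _ ≤ (1/2) * ((1/2 : ℝ)^m * a j) := by linarith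
        _ = (1/2 : ℝ)^(m+1) * a j := by ring
  rw [← (Nat.divModEquiv N).symm.summable_iff]
  have hg : Summable (fun m : ℕ => (1/2:ℝ)^m) :=
    summable_geometric_of_lt_one (by norm_num) (by norm_num)
  have hfin : Summable (fun j : Fin N => a (j : ℕ)) := Summable.of_finite
  have hs : Summable (fun p : ℕ × Fin N => (1/2:ℝ)^p.1 * a (p.2 : ℕ)) :=
    hg.mul_of_nonneg hfin (fun m => by positivity) (fun j => ha _)
  refine hs.of_nonneg_of_le (fun p => ha _) (fun p => ?_)
  simpa using key p.2 p.1

lemma summable_pow_div_Gamma (α β r : ℝ) (hα : 0 < α) (hβ : 0 < β) (hr : 0 ≤ r) :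
    Summable (fun n : ℕ => r ^ n / Real.Gamma (α * n + β)) := by
  obtain ⟨N, hN⟩ : ∃ N : ℕ, 1 ≤ α * N := by
    obtain ⟨N, hN⟩ := exists_nat_ge (1 / α)
    refine ⟨N, ?_⟩
    rw [div_le_iff₀ hα] at hN
    nlinarith
  have hNpos : 0 < N := by
    by_contra h
    push_neg at h
    interval_cases N
    simp at hN
    linarith
  obtain ⟨n₀, hn₀⟩ : ∃ n₀ : ℕ, max 2 (2 * r ^ N) ≤ α * n₀ + β := by
    obtain ⟨n₀, hn₀⟩ := exists_nat_ge (max 2 (2 * r ^ N) / α)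
    refine ⟨n₀, ?_⟩
    rw [div_le_iff₀ hα] at hn₀
    nlinarith
  have h2 : (2:ℝ) ≤ α * n₀ + β := le_trans (le_max_left _ _) hn₀
  have hrN : 2 * r ^ N ≤ α * n₀ + β := le_trans (le_max_right _ _) hn₀
  rw [← summable_nat_add_iff n₀]
  apply summable_of_block_half (N := N) ?_ hNpos
  · intro n
    set x : ℝ := α * (n + n₀) + β with hx
    have hx2 : 2 ≤ x := by
      have : (0:ℝ) ≤ α * n := by positivity
      rw [hx]; push_cast; nlinarith
    have hxr : 2 * r ^ N ≤ x := by
      have : (0:ℝ) ≤ α * n := by positivity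
      rw [hx]; push_cast; nlinarith
    have hΓx : 0 < Real.Gamma x := Real.Gamma_pos_of_pos (by linarith)
    have hidx : α * ((n + N + n₀ : ℕ) : ℝ) + β = x + α * N := by push_cast; ring
    have hidx2 : α * ((n + n₀ : ℕ) : ℝ) + β = x := by push_cast; ring
    have hΓ2 : 0 < Real.Gamma (x + α * N) :=
      Real.Gamma_pos_of_pos (by nlinarith)
    have hmono : Real.Gamma (x + 1) ≤ Real.Gamma (x + α * N) := by
      rcases eq_or_lt_of_le hN with h | h
      · rw [← h]
      · exact le_of_lt (Real.Gamma_strictMonoOn_Ici (by simp [Set.mem_Ici]; linarith)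
          (by simp [Set.mem_Ici]; nlinarith) (by linarith))
    have hG1 : Real.Gamma (x + 1) = x * Real.Gamma x :=
      Real.Gamma_add_one (by linarith)
    rw [hG1] at hmono
    show r ^ (n + N + n₀) / Real.Gamma (α * ((n + N + n₀ : ℕ) : ℝ) + β) ≤
      1 / 2 * (r ^ (n + n₀) / Real.Gamma (α * ((n + n₀ : ℕ) : ℝ) + β))
    rw [hidx, hidx2, mul_div_assoc', div_le_div_iff₀ hΓ2 hΓx]
    have he : r ^ (n + N + n₀) = r ^ (n + n₀) * r ^ N := by rw [← pow_add]; ring_nf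
    rw [he]
    have hrn : (0:ℝ) ≤ r ^ (n + n₀) := by positivity
    nlinarith [mul_le_mul_of_nonneg_left hmono hrn, mul_le_mul_of_nonneg_right hxr hrn,
      mul_pos hΓx (pow_pos hα 1)]
  · intro n
    have : 0 < Real.Gamma (α * (n + n₀) + β) := Real.Gamma_pos_of_pos (by positivity)
    positivity


/-- Let `α > 0`, `λ > 0` and `k ≥ 1` a natural number. Then for every
`t > 0`, the function `t ↦ t^k E_{α,k+1}(−λ t^α)` is differentiable at `t` with
derivative `d/dt (t^k E_{α,k+1}(−λ t^α)) = t^{k−1} E_{α,k}(−λ t^α)`. -/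
theorem hasDerivAt_pow_mittagLeffler (α lam : ℝ) (hα : 0 < α) (hlam : 0 < lam)
    (k : ℕ) (hk : 1 ≤ k) :
    ∀ t : ℝ, 0 < t →
      HasDerivAt (fun s : ℝ => s ^ (k : ℝ) * mittagLeffler α ((k : ℝ) + 1) (-lam * s ^ α))
        (t ^ ((k : ℝ) - 1) * mittagLeffler α (k : ℝ) (-lam * t ^ α)) t := by
  intro t ht
  have hk1 : (1:ℝ) ≤ (k:ℝ) := by exact_mod_cast hk
  have hk0 : (0:ℝ) < (k:ℝ) := by linarith
  set B : ℝ := max (2 * t) 1 with hB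
  have hB1 : (1:ℝ) ≤ B := le_max_right _ _
  have hB0 : (0:ℝ) < B := by linarith
  set I : Set ℝ := Set.Ioo (t/2) (2*t) with hI
  have htI : t ∈ I := ⟨by linarith, by linarith⟩
  have hIpos : ∀ y ∈ I, (0:ℝ) < y := fun y hy => lt_trans (by linarith) hy.1
  set f : ℕ → ℝ → ℝ :=
    fun n s => ((-lam)^n / Real.Gamma (α * n + k + 1)) * s ^ (α * n + k) with hf
  set F : ℕ → ℝ → ℝ :=
    fun n s => ((-lam)^n / Real.Gamma (α * n + k)) * s ^ (α * n + k - 1) with hF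
  set u : ℕ → ℝ := fun n => (lam * B ^ α)^n / Real.Gamma (α * n + k) * B ^ (k:ℝ) with hu
  have hppos : ∀ n : ℕ, (0:ℝ) < α * n + k := by
    intro n
    have : (0:ℝ) ≤ α * n := by positivity
    linarith
  have hΓpos : ∀ n : ℕ, (0:ℝ) < Real.Gamma (α * n + k) :=
    fun n => Real.Gamma_pos_of_pos (hppos n)
  have hΓrec : ∀ n : ℕ, Real.Gamma (α * n + k + 1) = (α * n + k) * Real.Gamma (α * n + k) :=
    fun n => Real.Gamma_add_one (hppos n).ne'
  -- summability of the bounds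
  have husum : Summable u := by
    apply Summable.mul_right
    exact summable_pow_div_Gamma α k (lam * B ^ α) hα hk0 (by positivity)
  -- each term has the right derivative
  have hderiv : ∀ (n : ℕ) (y : ℝ), y ∈ I → HasDerivAt (f n) (F n y) y := by
    intro n y hy
    have hy0 := hIpos y hy
    have h := (Real.hasDerivAt_rpow_const (x := y) (p := α * n + k)
      (Or.inl hy0.ne')).const_mul ((-lam)^n / Real.Gamma (α * n + k + 1))
    refine h.congr_deriv (Eq.symm ?_)
    show (-lam)^n / Real.Gamma (α * n + k) * y ^ (α * n + k - 1) =
      (-lam)^n / Real.Gamma (α * n + k + 1) * ((α * n + k) * y ^ (α * n + k - 1))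
    rw [hΓrec n, div_mul_eq_mul_div, div_mul_eq_mul_div,
      div_eq_div_iff (hΓpos n).ne' (mul_pos (hppos n) (hΓpos n)).ne']
    ring
  -- bounds on the derivatives
  have hbound : ∀ (n : ℕ) (y : ℝ), y ∈ I → ‖F n y‖ ≤ u n := by
    intro n y hy
    have hy0 := hIpos y hy
    have hyB : y ≤ B := le_trans (le_of_lt hy.2) (le_max_left _ _)
    have he0 : (0:ℝ) ≤ α * n + k - 1 := by linarith [hppos n, (by positivity : (0:ℝ) ≤ α * n)]
    have h1 : y ^ (α * n + k - 1) ≤ B ^ (α * n + k - 1) :=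
      Real.rpow_le_rpow hy0.le hyB he0
    have h2 : B ^ (α * n + k - 1) ≤ B ^ (α * n + k) :=
      Real.rpow_le_rpow_of_exponent_le hB1 (by linarith)
    have h3 : B ^ (α * n + k) = (B ^ α) ^ n * B ^ (k:ℝ) := by
      rw [Real.rpow_add hB0, ← Real.rpow_natCast (B ^ α) n, ← Real.rpow_mul hB0.le]
    have hrpos : (0:ℝ) ≤ y ^ (α * n + k - 1) := (Real.rpow_pos_of_pos hy0 _).le
    have hnorm : ‖F n y‖ = lam ^ n / Real.Gamma (α * n + k) * y ^ (α * n + k - 1) := by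
      rw [hF]
      rw [norm_mul, norm_div, norm_pow, Real.norm_eq_abs, Real.norm_eq_abs, Real.norm_eq_abs,
        abs_neg, abs_of_pos hlam, abs_of_pos (hΓpos n),
        abs_of_pos (Real.rpow_pos_of_pos hy0 _)]
    rw [hnorm]
    show _ ≤ (lam * B ^ α)^n / Real.Gamma (α * n + k) * B ^ (k:ℝ)
    rw [mul_pow]
    have hBk : (0:ℝ) < B ^ (k:ℝ) := Real.rpow_pos_of_pos hB0 _
    have hc : (0:ℝ) ≤ lam ^ n / Real.Gamma (α * n + k) := by positivity
    calc lam ^ n / Real.Gamma (α * n + k) * y ^ (α * n + k - 1)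
        ≤ lam ^ n / Real.Gamma (α * n + k) * ((B ^ α) ^ n * B ^ (k:ℝ)) := by
          apply mul_le_mul_of_nonneg_left _ hc
          rw [← h3]; exact le_trans h1 h2
      _ = lam ^ n * (B ^ α) ^ n / Real.Gamma (α * n + k) * B ^ (k:ℝ) := by ring
  -- equality of the target function with the series on I
  have heq : ∀ y ∈ I,
      y ^ (k:ℝ) * mittagLeffler α ((k:ℝ) + 1) (-lam * y ^ α) = ∑' n, f n y := by
    intro y hy
    have hy0 := hIpos y hy
    rw [mittagLeffler, ← tsum_mul_left]
    apply tsum_congr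
    intro n
    show y ^ (k:ℝ) * ((-lam * y ^ α) ^ n / Real.Gamma (α * n + ((k:ℝ) + 1))) =
      (-lam)^n / Real.Gamma (α * n + k + 1) * y ^ (α * n + (k:ℝ))
    have e1 : (-lam * y ^ α) ^ n = (-lam)^n * y ^ (α * n) := by
      rw [mul_pow, ← Real.rpow_natCast (y ^ α) n, ← Real.rpow_mul hy0.le]
    have e2 : y ^ (α * n + (k:ℝ)) = y ^ (α * n) * y ^ (k:ℝ) := Real.rpow_add hy0 _ _
    have e3 : α * n + ((k:ℝ) + 1) = α * n + k + 1 := by ring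
    rw [e1, e2, e3]
    ring
  -- summability of the series at t
  have hsum0 : Summable (fun n => f n t) := by
    have base : Summable (fun n : ℕ => (lam * t ^ α)^n / Real.Gamma (α * n + ((k:ℝ)+1))) :=
      summable_pow_div_Gamma α ((k:ℝ)+1) (lam * t ^ α) hα (by linarith) (by positivity)
    apply Summable.of_norm_bounded (base.mul_right (t ^ (k:ℝ)))
    intro n
    have hΓ1 : (0:ℝ) < Real.Gamma (α * n + k + 1) := by
      rw [hΓrec n]; exact mul_pos (hppos n) (hΓpos n)
    have e3 : α * n + ((k:ℝ) + 1) = α * n + k + 1 := by ring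
    have e4 : t ^ (α * n + (k:ℝ)) = (t ^ α) ^ n * t ^ (k:ℝ) := by
      rw [Real.rpow_add ht, ← Real.rpow_natCast (t ^ α) n, ← Real.rpow_mul ht.le]
    have : ‖f n t‖ = lam ^ n / Real.Gamma (α * n + k + 1) * t ^ (α * n + (k:ℝ)) := by
      rw [hf, norm_mul, norm_div, norm_pow, Real.norm_eq_abs, Real.norm_eq_abs,
        Real.norm_eq_abs, abs_neg, abs_of_pos hlam, abs_of_pos hΓ1,
        abs_of_pos (Real.rpow_pos_of_pos ht _)]
    rw [this, e3, e4, mul_pow]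
    ring_nf
    exact le_refl _
  -- main application
  have main : HasDerivAt (fun z => ∑' n, f n z) (∑' n, F n t) t :=
    hasDerivAt_tsum_of_isPreconnected husum isOpen_Ioo isPreconnected_Ioo
      hderiv hbound htI hsum0 htI
  have main2 : HasDerivAt
      (fun s : ℝ => s ^ (k : ℝ) * mittagLeffler α ((k : ℝ) + 1) (-lam * s ^ α))
      (∑' n, F n t) t := by
    apply main.congr_of_eventuallyEq
    filter_upwards [isOpen_Ioo.mem_nhds htI] with y hy
    exact heq y hy
  convert main2 using 1
  rw [mittagLeffler, ← tsum_mul_left]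
  apply tsum_congr
  intro n
  show t ^ ((k:ℝ) - 1) * ((-lam * t ^ α) ^ n / Real.Gamma (α * n + (k:ℝ))) =
    (-lam)^n / Real.Gamma (α * n + k) * t ^ (α * n + (k:ℝ) - 1)
  have hy0 := ht
  have e1 : (-lam * t ^ α) ^ n = (-lam)^n * t ^ (α * n) := by
    rw [mul_pow, ← Real.rpow_natCast (t ^ α) n, ← Real.rpow_mul hy0.le]
  have e2 : t ^ (α * n + ((k:ℝ) - 1)) = t ^ (α * n) * t ^ ((k:ℝ) - 1) := Real.rpow_add hy0 _ _
  have e3 : α * n + ((k:ℝ) - 1) = α * n + k - 1 := by ring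
  rw [e1, ← e3, e2]
  ring
end
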